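/- arXiv:2510.02514 — 3 statements merged into one kernel-verified Lean document; each statement's English description precedes it below -/
import Mathlib

section
/- Let q : ℝ^d → ℝ be a strictly positive, continuously differentiable probability density, and let v ∈ ℝ^d be such that ∇ log q(y + v) = ∇ log q(y) for every y ∈ ℝ^d. Then v = 0. -/
/-!
Since the score determines `log q` up to an additive constant, `∇ log q(y + v) = ∇ log q(y)`
gives `q(y + v) = c · q(y)`; translation invariance of Lebesgue measure forces `c = 1`, so `q`
is `v`-periodic. The balls of radius `‖v‖ / 2` around the points `n • v` are then disjoint and
all carry the same mass, so an integrable periodic function has integral zero over each of them,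
which a positive `q` cannot have unless the balls are empty, i.e. `v = 0`.
-/

open MeasureTheory

/-- A probability density on ℝ^d: a nonnegative Lebesgue-measurable function integrating to 1. -/
def IsProbDensity (d : ℕ) (q : EuclideanSpace ℝ (Fin d) → ℝ) : Prop :=
  Measurable q ∧ (∀ x, 0 ≤ q x) ∧ ∫ x, q x = 1

open Function Metric

section Translates

variable {E : Type*} [NormedAddCommGroup E]

theorem pairwise_disjoint_ball_add_zsmul [NormedSpace ℝ E] (c v : E) :
    Pairwise (Disjoint on fun n : ℤ => ball (c + n • v) (‖v‖ / 2)) := by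
  intro m n hmn
  apply ball_disjoint_ball
  have hmn' : (1 : ℝ) ≤ |((m - n : ℤ) : ℝ)| := by
    exact_mod_cast Int.one_le_abs (sub_ne_zero.mpr hmn)
  calc ‖v‖ / 2 + ‖v‖ / 2 = 1 * ‖v‖ := by ring
    _ ≤ |((m - n : ℤ) : ℝ)| * ‖v‖ := by gcongr
    _ = dist (c + m • v) (c + n • v) := by
      rw [dist_add_left, dist_eq_norm, ← sub_smul, norm_zsmul ℝ, Real.norm_eq_abs]

variable [MeasurableSpace E] [BorelSpace E] {μ : Measure E} [μ.IsAddRightInvariant]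
  {G : Type*} [NormedAddCommGroup G] [NormedSpace ℝ G]

theorem setIntegral_ball_add_eq_of_periodic {f : E → G} {w : E} (hf : Periodic f w)
    (c : E) (r : ℝ) : ∫ x in ball (c + w) r, f x ∂μ = ∫ x in ball c r, f x ∂μ := by
  rw [← (measurePreserving_add_right μ w).setIntegral_preimage_emb
    (measurableEmbedding_addRight w), preimage_add_right_ball, add_sub_cancel_right]
  exact setIntegral_congr_fun measurableSet_ball fun x _ => hf x

theorem Function.Periodic.setIntegral_ball_eq_zero [NormedSpace ℝ E] {f : E → G} {v : E}
    (hf : Periodic f v) (hfi : Integrable f μ) (c : E) : ∫ x in ball c (‖v‖ / 2), f x ∂μ = 0 := by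
  have hsum := hasSum_integral_iUnion (fun _ => measurableSet_ball)
    (pairwise_disjoint_ball_add_zsmul c v) hfi.integrableOn
  simp_rw [setIntegral_ball_add_eq_of_periodic (hf.zsmul _)] at hsum
  exact (summable_const_iff _).1 hsum.summable

end Translates

section Calculus

variable {𝕜 : Type*} [NontriviallyNormedField 𝕜] [IsRCLikeNormedField 𝕜]
  {E : Type*} [NormedAddCommGroup E] [NormedSpace 𝕜 E]
  {F : Type*} [NormedAddCommGroup F] [NormedSpace 𝕜 F]

theorem Differentiable.sub_eq_of_periodic_fderiv {f : E → F} (hf : Differentiable 𝕜 f) {v : E}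
    (h : Periodic (fderiv 𝕜 f) v) (y : E) : f (y + v) - f y = f v - f 0 := by
  have hshift : Differentiable 𝕜 fun x => f (x + v) := hf.comp (differentiable_id.add_const v)
  have hderiv (x : E) : fderiv 𝕜 (fun x => f (x + v) - f x) x = 0 := by
    rw [fderiv_fun_sub (hshift x) (hf x), fderiv_comp_add_right, h x, sub_self]
  simpa using is_const_of_fderiv_eq_zero (hshift.sub hf) hderiv y 0

end Calculus

theorem add_eq_div_mul_of_periodic_fderiv_log {E : Type*} [NormedAddCommGroup E]
    [NormedSpace ℝ E] {f : E → ℝ} (hpos : ∀ x, 0 < f x) (hf : Differentiable ℝ f) {v : E}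
    (h : Periodic (fderiv ℝ fun x => Real.log (f x)) v) (y : E) :
    f (y + v) = f v / f 0 * f y := by
  have hlog := (hf.log fun x => (hpos x).ne').sub_eq_of_periodic_fderiv h y
  rw [← Real.log_div (hpos _).ne' (hpos _).ne', ← Real.log_div (hpos _).ne' (hpos _).ne'] at hlog
  have := Real.log_injOn_pos (div_pos (hpos _) (hpos _)) (div_pos (hpos _) (hpos _)) hlog
  rw [← this, div_mul_cancel₀ _ (hpos y).ne']

theorem Function.periodic_of_add_eq_const_mul {E : Type*} [MeasurableSpace E] [AddGroup E]
    [MeasurableAdd E] {μ : Measure E} [μ.IsAddRightInvariant] {f : E → ℝ} {a : ℝ} {v : E}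
    (h : ∀ y, f (y + v) = a * f y) (hf : ∫ x, f x ∂μ ≠ 0) : Periodic f v := by
  have ha : a * ∫ x, f x ∂μ = ∫ x, f x ∂μ := by
    rw [← integral_const_mul, ← integral_add_right_eq_self f v]
    simp_rw [h]
  intro y
  rw [h, (mul_eq_right₀ hf).1 ha, one_mul]

theorem setIntegral_pos_of_pos {X : Type*} [MeasurableSpace X] {μ : Measure X} {s : Set X}
    {f : X → ℝ} (hf : ∀ x, 0 < f x) (hfi : IntegrableOn f s μ) (hs : 0 < μ s) :
    0 < ∫ x in s, f x ∂μ := by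
  rw [setIntegral_pos_iff_support_of_nonneg_ae (.of_forall fun x => (hf x).le) hfi,
    support_eq_univ fun x => (hf x).ne', Set.univ_inter]
  exact hs

/-- If a strictly positive C¹ probability density has a score (gradient of the
log-density) that is invariant under translation by `v`, then `v = 0`. -/
theorem score_translation_invariant (d : ℕ) (q : EuclideanSpace ℝ (Fin d) → ℝ)
    (hq : IsProbDensity d q) (hpos : ∀ y, 0 < q y) (hC1 : ContDiff ℝ 1 q)
    (v : EuclideanSpace ℝ (Fin d))
    (h : ∀ y : EuclideanSpace ℝ (Fin d),
      gradient (fun z => Real.log (q z)) (y + v) = gradient (fun z => Real.log (q z)) y) :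
    v = 0 := by
  obtain ⟨-, -, hint⟩ := hq
  have hqi : Integrable q := integrable_of_integral_eq_one hint
  -- `gradient` is `fderiv` transported by the Riesz isomorphism `toDual`.
  have hscore : Periodic (fderiv ℝ fun z => Real.log (q z)) v := fun y =>
    (InnerProductSpace.toDual ℝ _).symm.injective (h y)
  have hper : Periodic q v := periodic_of_add_eq_const_mul (μ := volume)
    (add_eq_div_mul_of_periodic_fderiv_log hpos (hC1.differentiable one_ne_zero) hscore)
    (hint ▸ one_ne_zero)
  by_contra hv
  have hball : 0 < volume (ball (0 : EuclideanSpace ℝ (Fin d)) (‖v‖ / 2)) :=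
    measure_ball_pos volume 0 (by positivity)
  exact (setIntegral_pos_of_pos hpos hqi.integrableOn hball).ne'
    (hper.setIntegral_ball_eq_zero hqi 0)
end

section
/- Let Σ be a symmetric positive-semidefinite d×d real matrix and Δ ∈ ℝ^d. If Δ lies in the range of Σ, then ∫₀^∞ Δᵀ (γΣ + I)^{−2} Δ dγ = Δᵀ Σ† Δ, where Σ† is the Moore–Penrose pseudoinverse of Σ; if Δ does not lie in the range of Σ, then ∫₀^∞ Δᵀ (γΣ + I)^{−2} Δ dγ = +∞. -/
/-!
Diagonalise `Σ = U diag(λ) Uᵀ` and put `c = Uᵀ Δ`. Then `Δᵀ (γΣ + 1)⁻² Δ = ∑ᵢ cᵢ² / (γλᵢ + 1)²`,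
and the `i`-th term integrates over `(0, ∞)` to `cᵢ² / λᵢ`, which is `∞` exactly when
`λᵢ = 0 ≠ cᵢ`. No such `i` exists iff `Δ` is in the range of `Σ`; and if `Δ = Σ u` then
`cᵢ = λᵢ (Uᵀ u)ᵢ`, so the sum is `uᵀ Σ u`, which equals `Δᵀ Σ† Δ` by `Σ Σ† Σ = Σ` alone.
-/

open MeasureTheory Matrix
open scoped ENNReal

namespace Matrix.IsHermitian

variable {n 𝕜 : Type*} [Fintype n] [DecidableEq n] [RCLike 𝕜] {A : Matrix n n 𝕜}
  (hA : A.IsHermitian)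

theorem star_eigenvectorUnitary_mulVec_cfc_mulVec (f : ℝ → ℝ) (v : n → 𝕜) :
    star (hA.eigenvectorUnitary : Matrix n n 𝕜) *ᵥ (cfc f A *ᵥ v) =
      fun i ↦ (f (hA.eigenvalues i) : 𝕜) * (star (hA.eigenvectorUnitary : Matrix n n 𝕜) *ᵥ v) i := by
  rw [hA.cfc_eq, IsHermitian.cfc, Unitary.conjStarAlgAut_apply, mulVec_mulVec, ← mul_assoc,
    ← mul_assoc, Unitary.coe_star_mul_self, one_mul, ← mulVec_mulVec]
  ext i
  simp [mulVec_diagonal]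

theorem star_eigenvectorUnitary_mulVec_mulVec (v : n → 𝕜) :
    star (hA.eigenvectorUnitary : Matrix n n 𝕜) *ᵥ (A *ᵥ v) =
      fun i ↦ (hA.eigenvalues i : 𝕜) * (star (hA.eigenvectorUnitary : Matrix n n 𝕜) *ᵥ v) i := by
  convert hA.star_eigenvectorUnitary_mulVec_cfc_mulVec (fun x ↦ x) v using 3
  exact (cfc_id' ℝ A hA).symm

theorem exists_mulVec_eq_of_eigenvalues_eq_zero {v : n → 𝕜}
    (hv : ∀ i, hA.eigenvalues i = 0 → (star (hA.eigenvectorUnitary : Matrix n n 𝕜) *ᵥ v) i = 0) :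
    ∃ u, A *ᵥ u = v := by
  -- `cfc (·⁻¹) A` is the Moore–Penrose inverse of `A`, since `0⁻¹ = 0` in `ℝ`
  refine ⟨cfc (·⁻¹ : ℝ → ℝ) A *ᵥ v, ?_⟩
  have hcoord : star (hA.eigenvectorUnitary : Matrix n n 𝕜) *ᵥ (A *ᵥ (cfc (·⁻¹ : ℝ → ℝ) A *ᵥ v))
      = star (hA.eigenvectorUnitary : Matrix n n 𝕜) *ᵥ v := by
    rw [hA.star_eigenvectorUnitary_mulVec_mulVec, hA.star_eigenvectorUnitary_mulVec_cfc_mulVec]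
    ext i
    by_cases hi : hA.eigenvalues i = 0
    · simp [hi, hv i hi]
    · simp [hi]
  simpa [mulVec_mulVec, ← mul_assoc] using
    congrArg ((hA.eigenvectorUnitary : Matrix n n 𝕜) *ᵥ ·) hcoord

end Matrix.IsHermitian

theorem Matrix.IsHermitian.dotProduct_cfc_mulVec {n : Type*} [Fintype n] [DecidableEq n]
    {A : Matrix n n ℝ} (hA : A.IsHermitian) (f : ℝ → ℝ) (v : n → ℝ) :
    v ⬝ᵥ (cfc f A *ᵥ v) =
      ∑ i, f (hA.eigenvalues i) * (star (hA.eigenvectorUnitary : Matrix n n ℝ) *ᵥ v) i ^ 2 := by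
  set U := (hA.eigenvectorUnitary : Matrix n n ℝ)
  have hU : U * star U = 1 := Unitary.coe_mul_star_self _
  calc v ⬝ᵥ (cfc f A *ᵥ v) = (star U *ᵥ v) ⬝ᵥ (star U *ᵥ (cfc f A *ᵥ v)) := by
        rw [dotProduct_mulVec (star U *ᵥ v), star_eq_conjTranspose,
          conjTranspose_eq_transpose_of_trivial, mulVec_transpose, vecMul_vecMul,
          ← conjTranspose_eq_transpose_of_trivial, ← star_eq_conjTranspose, hU, vecMul_one]
    _ = _ := by
        rw [hA.star_eigenvectorUnitary_mulVec_cfc_mulVec]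
        simp only [dotProduct]
        congr! 1 with i
        simp only [RCLike.ofReal_real_eq_id, id]
        ring

theorem Matrix.dotProduct_mulVec_mulVec_of_mul_mul_self {n R : Type*} [Fintype n] [CommSemiring R]
    {S P : Matrix n n R} (hS : S.IsSymm) (hP : S * P * S = S) (u : n → R) :
    (S *ᵥ u) ⬝ᵥ (P *ᵥ (S *ᵥ u)) = u ⬝ᵥ (S *ᵥ u) := by
  nth_rewrite 1 [← hS.eq]
  rw [mulVec_transpose, ← dotProduct_mulVec, mulVec_mulVec, mulVec_mulVec, hP]

open scoped ComplexOrder in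
theorem Matrix.PosSemidef.inv_smul_add_one_sq_eq_cfc {n 𝕜 : Type*} [Fintype n] [DecidableEq n]
    [RCLike 𝕜] {S : Matrix n n 𝕜} (hS : S.PosSemidef) {γ : ℝ} (hγ : 0 ≤ γ) :
    (γ • S + 1)⁻¹ ^ 2 = cfc (fun x ↦ (γ * x + 1)⁻¹ ^ 2) S := by
  have hS' : IsSelfAdjoint S := hS.isHermitian
  have hne : ∀ x ∈ spectrum ℝ S, γ * x + 1 ≠ 0 := by
    intro x hx
    rw [hS.isHermitian.spectrum_real_eq_range_eigenvalues] at hx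
    obtain ⟨i, rfl⟩ := hx
    nlinarith [hS.eigenvalues_nonneg i]
  have hcont : ContinuousOn (fun x ↦ γ * x + 1) (spectrum ℝ S) := by fun_prop
  rw [cfc_pow (fun x ↦ (γ * x + 1)⁻¹) 2 S (hcont.inv₀ hne) hS',
    cfc_inv (fun x ↦ γ * x + 1) S hne (ha := hS'), cfc_add_const 1 (γ * ·) S (ha := hS'),
    cfc_const_mul_id γ S hS', nonsing_inv_eq_ringInverse, Algebra.algebraMap_eq_smul_one, one_smul]

theorem lintegral_Ioi_inv_mul_add_one_sq {a : ℝ} (ha : 0 ≤ a) :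
    ∫⁻ γ in Set.Ioi (0 : ℝ), ENNReal.ofReal ((γ * a + 1)⁻¹ ^ 2) = (ENNReal.ofReal a)⁻¹ := by
  -- for `a = 0` both sides are `∞`, as `(0 : ℝ≥0∞)⁻¹ = ∞`
  rcases ha.eq_or_lt with rfl | ha
  · simp
  have hpos : ∀ x ∈ Set.Ici (0 : ℝ), 0 < x * a + 1 := fun x hx ↦ by
    have : (0 : ℝ) ≤ x := hx
    positivity
  have hderiv : ∀ x ∈ Set.Ici (0 : ℝ),
      HasDerivAt (fun γ ↦ -(γ * a + 1)⁻¹ / a) ((x * a + 1)⁻¹ ^ 2) x := by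
    intro x hx
    have hx' := (hpos x hx).ne'
    refine ((((hasDerivAt_id' x).mul_const a).add_const 1).inv hx').neg.div_const a
      |>.congr_deriv ?_
    field_simp
  have hnonneg : ∀ x ∈ Set.Ioi (0 : ℝ), 0 ≤ (x * a + 1)⁻¹ ^ 2 := fun _ _ ↦ by positivity
  have htendsto : Filter.Tendsto (fun γ ↦ -(γ * a + 1)⁻¹ / a) Filter.atTop (nhds 0) := by
    have h : Filter.Tendsto (fun γ ↦ γ * a + 1) Filter.atTop Filter.atTop :=
      Filter.tendsto_atTop_add_const_right _ 1 (Filter.tendsto_id.atTop_mul_const ha)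
    simpa using (h.inv_tendsto_atTop.neg.div_const a)
  rw [← ofReal_integral_eq_lintegral_ofReal
      (integrableOn_Ioi_deriv_of_nonneg' hderiv hnonneg htendsto)
      (Filter.Eventually.of_forall fun _ ↦ by positivity),
    integral_Ioi_of_hasDerivAt_of_nonneg' hderiv hnonneg htendsto]
  rw [zero_mul, zero_add, inv_one, zero_sub, neg_div, neg_neg, one_div,
    ENNReal.ofReal_inv_of_pos ha]

namespace Matrix.PosSemidef

variable {n : Type*} [Fintype n] [DecidableEq n] {S : Matrix n n ℝ}

theorem lintegral_dotProduct_inv_smul_add_one_sq_mulVec (hS : S.PosSemidef) (v : n → ℝ) :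
    ∫⁻ γ in Set.Ioi (0 : ℝ), ENNReal.ofReal (v ⬝ᵥ ((γ • S + 1)⁻¹ ^ 2 *ᵥ v)) =
      ∑ i, ENNReal.ofReal ((star (hS.isHermitian.eigenvectorUnitary : Matrix n n ℝ) *ᵥ v) i ^ 2) *
        (ENNReal.ofReal (hS.isHermitian.eigenvalues i))⁻¹ := by
  set c := star (hS.isHermitian.eigenvectorUnitary : Matrix n n ℝ) *ᵥ v
  set lam := hS.isHermitian.eigenvalues
  calc _ = ∫⁻ γ in Set.Ioi (0 : ℝ),
        ∑ i, ENNReal.ofReal (c i ^ 2) * ENNReal.ofReal ((γ * lam i + 1)⁻¹ ^ 2) := by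
        refine setLIntegral_congr_fun measurableSet_Ioi fun γ hγ ↦ ?_
        rw [hS.inv_smul_add_one_sq_eq_cfc (le_of_lt hγ), hS.isHermitian.dotProduct_cfc_mulVec,
          ENNReal.ofReal_sum_of_nonneg fun i _ ↦ by positivity]
        refine Finset.sum_congr rfl fun i _ ↦ ?_
        rw [mul_comm, ENNReal.ofReal_mul (sq_nonneg _)]
    _ = _ := by
        rw [lintegral_finsetSum' _ fun i _ ↦ by fun_prop]
        refine Finset.sum_congr rfl fun i _ ↦ ?_
        rw [lintegral_const_mul' _ _ ENNReal.ofReal_ne_top,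
          lintegral_Ioi_inv_mul_add_one_sq (hS.eigenvalues_nonneg i)]

theorem lintegral_dotProduct_inv_smul_add_one_sq_mulVec_mulVec (hS : S.PosSemidef) (u : n → ℝ) :
    ∫⁻ γ in Set.Ioi (0 : ℝ), ENNReal.ofReal ((S *ᵥ u) ⬝ᵥ ((γ • S + 1)⁻¹ ^ 2 *ᵥ (S *ᵥ u))) =
      ENNReal.ofReal (u ⬝ᵥ (S *ᵥ u)) := by
  have hquad : u ⬝ᵥ (S *ᵥ u) = ∑ i, hS.isHermitian.eigenvalues i *
      (star (hS.isHermitian.eigenvectorUnitary : Matrix n n ℝ) *ᵥ u) i ^ 2 := by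
    convert hS.isHermitian.dotProduct_cfc_mulVec (fun x ↦ x) u using 3
    exact (cfc_id' ℝ S hS.isHermitian).symm
  rw [lintegral_dotProduct_inv_smul_add_one_sq_mulVec hS,
    hS.isHermitian.star_eigenvectorUnitary_mulVec_mulVec, hquad,
    ENNReal.ofReal_sum_of_nonneg fun i _ ↦ mul_nonneg (hS.eigenvalues_nonneg i) (sq_nonneg _)]
  refine Finset.sum_congr rfl fun i _ ↦ ?_
  rcases (hS.eigenvalues_nonneg i).eq_or_lt with h | h
  · simp [← h]
  · rw [← ENNReal.ofReal_inv_of_pos h, ← ENNReal.ofReal_mul (sq_nonneg _)]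
    congr 1
    simp only [RCLike.ofReal_real_eq_id, id]
    field_simp

theorem lintegral_dotProduct_inv_smul_add_one_sq_mulVec_eq_top (hS : S.PosSemidef) {v : n → ℝ}
    (hv : ¬∃ u, S *ᵥ u = v) :
    ∫⁻ γ in Set.Ioi (0 : ℝ), ENNReal.ofReal (v ⬝ᵥ ((γ • S + 1)⁻¹ ^ 2 *ᵥ v)) = ⊤ := by
  obtain ⟨i, hi, hvi⟩ : ∃ i, hS.isHermitian.eigenvalues i = 0 ∧
      (star (hS.isHermitian.eigenvectorUnitary : Matrix n n ℝ) *ᵥ v) i ≠ 0 := by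
    by_contra! h
    exact hv (hS.isHermitian.exists_mulVec_eq_of_eigenvalues_eq_zero h)
  rw [lintegral_dotProduct_inv_smul_add_one_sq_mulVec hS, ENNReal.sum_eq_top]
  exact ⟨i, Finset.mem_univ _, by simp [hi, hvi]⟩

end Matrix.PosSemidef

theorem integral_inv_sq_quadform_psd_general (d : ℕ) (S : Matrix (Fin d) (Fin d) ℝ)
    (hS : S.PosSemidef) (P : Matrix (Fin d) (Fin d) ℝ)
    (hP1 : S * P * S = S)
    (Δ : Fin d → ℝ) :
    ((∃ u, S.mulVec u = Δ) →
      ∫⁻ γ in Set.Ioi (0 : ℝ),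
          ENNReal.ofReal (Δ ⬝ᵥ (((γ • S + 1)⁻¹ ^ 2).mulVec Δ))
        = ENNReal.ofReal (Δ ⬝ᵥ (P.mulVec Δ))) ∧
    (¬(∃ u, S.mulVec u = Δ) →
      ∫⁻ γ in Set.Ioi (0 : ℝ),
          ENNReal.ofReal (Δ ⬝ᵥ (((γ • S + 1)⁻¹ ^ 2).mulVec Δ)) = ⊤) := by
  refine ⟨?_, hS.lintegral_dotProduct_inv_smul_add_one_sq_mulVec_eq_top⟩
  rintro ⟨u, rfl⟩
  rw [hS.lintegral_dotProduct_inv_smul_add_one_sq_mulVec_mulVec,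
    dotProduct_mulVec_mulVec_of_mul_mul_self (isHermitian_iff_isSymm.mp hS.isHermitian) hP1]

/-- For a symmetric positive-semidefinite matrix `Σ` with Moore–Penrose
pseudoinverse `P = Σ†` (characterized by the four Penrose conditions), and any vector `Δ`:
if `Δ` lies in the range of `Σ` then `∫₀^∞ Δᵀ (γΣ + I)⁻² Δ dγ = Δᵀ Σ† Δ`, and otherwise the
integral diverges to `+∞`. -/
theorem integral_inv_sq_quadform_psd (d : ℕ) (S : Matrix (Fin d) (Fin d) ℝ)
    (hS : S.PosSemidef) (P : Matrix (Fin d) (Fin d) ℝ)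
    (hP1 : S * P * S = S) (hP2 : P * S * P = P)
    (hP3 : (S * P)ᵀ = S * P) (hP4 : (P * S)ᵀ = P * S)
    (Δ : Fin d → ℝ) :
    ((∃ u, S.mulVec u = Δ) →
      ∫⁻ γ in Set.Ioi (0 : ℝ),
          ENNReal.ofReal (Δ ⬝ᵥ (((γ • S + 1)⁻¹ ^ 2).mulVec Δ))
        = ENNReal.ofReal (Δ ⬝ᵥ (P.mulVec Δ))) ∧
    (¬(∃ u, S.mulVec u = Δ) →
      ∫⁻ γ in Set.Ioi (0 : ℝ),
          ENNReal.ofReal (Δ ⬝ᵥ (((γ • S + 1)⁻¹ ^ 2).mulVec Δ)) = ⊤) :=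
  integral_inv_sq_quadform_psd_general d S hS P hP1 Δ
end

section
/- (Invariance of the conditional expectation under sufficient statistics.) Let (Ω, F, ℙ) be a probability space, let X : Ω → ℝ be integrable, let Y : Ω → E and T : E → E′ be measurable maps into measurable spaces E and E′. Suppose that the σ-algebra generated by X and the σ-algebra generated by Y are conditionally independent given the σ-algebra generated by T ∘ Y (i.e., Y ↔ T(Y) ↔ X is a Markov chain). Then E[X | σ(Y)] = E[X | σ(T ∘ Y)] almost surely. -/
open MeasureTheory Filter ProbabilityTheory Topology

/-! Write `𝒢 = σ(T ∘ Y) ≤ σ(Y)`. Since `μ[X|𝒢]` is `σ(Y)`-measurable, it suffices to show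
`∫ X · g(Y) = ∫ μ[X|𝒢] · g(Y)` for bounded measurable `g`. For bounded `f`, conditional
independence and the pull-out property give
`∫ f(X) g(Y) = ∫ μ[f(X)|𝒢] μ[g(Y)|𝒢] = ∫ f(X) μ[g(Y)|𝒢]`. Letting `f` run through the
truncations of the identity, dominated convergence yields `∫ X g(Y) = ∫ X μ[g(Y)|𝒢]`, and
self-adjointness of `μ[·|𝒢]` turns the right-hand side into `∫ μ[X|𝒢] g(Y)`. -/

section CondExpIntegral

variable {Ω : Type*} {m m0 : MeasurableSpace Ω} {μ : Measure Ω}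

theorem integral_mul_condExp_of_aestronglyMeasurable (hm : m ≤ m0) [SigmaFinite (μ.trim hm)]
    {c W : Ω → ℝ} (hc : AEStronglyMeasurable[m] c μ) (hcW : Integrable (c * W) μ)
    (hW : Integrable W μ) :
    ∫ ω, (c * μ[W|m]) ω ∂μ = ∫ ω, (c * W) ω ∂μ := by
  rw [← integral_condExp hm (f := c * W)]
  exact integral_congr_ae (condExp_mul_of_aestronglyMeasurable_left hc hcW hW).symm

theorem integral_condExp_mul_eq_integral_mul_condExp (hm : m ≤ m0) [SigmaFinite (μ.trim hm)]
    {U V : Ω → ℝ} (hU : Integrable U μ) (hV : Integrable V μ)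
    (hUV : Integrable (μ[U|m] * V) μ) (hVU : Integrable (μ[V|m] * U) μ) :
    ∫ ω, (μ[U|m] * V) ω ∂μ = ∫ ω, (U * μ[V|m]) ω ∂μ :=
  calc ∫ ω, (μ[U|m] * V) ω ∂μ = ∫ ω, (μ[U|m] * μ[V|m]) ω ∂μ :=
        (integral_mul_condExp_of_aestronglyMeasurable hm
          stronglyMeasurable_condExp.aestronglyMeasurable hUV hV).symm
    _ = ∫ ω, (μ[V|m] * μ[U|m]) ω ∂μ := by rw [mul_comm]
    _ = ∫ ω, (U * μ[V|m]) ω ∂μ := by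
        rw [integral_mul_condExp_of_aestronglyMeasurable hm
          stronglyMeasurable_condExp.aestronglyMeasurable hVU hU, mul_comm]

theorem integral_mul_eq_integral_mul_condExp_of_condExp_mul_eq (hm : m ≤ m0)
    [SigmaFinite (μ.trim hm)] {U V : Ω → ℝ} (hU : Integrable U μ)
    (hVU : Integrable (μ[V|m] * U) μ) (h : μ[U * V|m] =ᵐ[μ] μ[U|m] * μ[V|m]) :
    ∫ ω, (U * V) ω ∂μ = ∫ ω, (U * μ[V|m]) ω ∂μ :=
  calc ∫ ω, (U * V) ω ∂μ = ∫ ω, (μ[V|m] * μ[U|m]) ω ∂μ := by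
        rw [← integral_condExp hm, integral_congr_ae h, mul_comm]
    _ = ∫ ω, (U * μ[V|m]) ω ∂μ := by
        rw [integral_mul_condExp_of_aestronglyMeasurable hm
          stronglyMeasurable_condExp.aestronglyMeasurable hVU hU, mul_comm]

theorem tendsto_integral_truncation_mul {f g : Ω → ℝ} {C : ℝ} (hf : Integrable f μ)
    (hg : AEStronglyMeasurable g μ) (hgC : ∀ᵐ x ∂μ, |g x| ≤ C) :
    Tendsto (fun A => ∫ x, (truncation f A * g) x ∂μ) atTop (𝓝 (∫ x, (f * g) x ∂μ)) := by
  refine tendsto_integral_filter_of_dominated_convergence (fun x => |f x| * C)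
    (.of_forall fun A => hf.aestronglyMeasurable.truncation.mul hg)
    (.of_forall fun A => ?_) (hf.abs.mul_const C) (.of_forall fun x => ?_)
  · filter_upwards [hgC] with x hx
    rw [Real.norm_eq_abs, Pi.mul_apply, abs_mul]
    exact mul_le_mul (abs_truncation_le_abs_self f A x) hx (abs_nonneg _) (abs_nonneg _)
  · refine (tendsto_const_nhds.congr' ?_).mul tendsto_const_nhds
    filter_upwards [Ioi_mem_atTop |f x|] with A hA
    exact (truncation_eq_self hA).symm

theorem integral_mul_eq_integral_condExp_mul_of_condExp_truncation_mul_eq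
    [IsFiniteMeasure μ] (hm : m ≤ m0)
    {X V : Ω → ℝ} {C : ℝ} (hX : Integrable X μ) (hV : AEStronglyMeasurable V μ)
    (hVC : ∀ᵐ ω ∂μ, |V ω| ≤ C)
    (hfactor : ∀ A, μ[truncation X A * V|m] =ᵐ[μ] μ[truncation X A|m] * μ[V|m]) :
    ∫ ω, (X * V) ω ∂μ = ∫ ω, (μ[X|m] * V) ω ∂μ := by
  have hVC' : ∀ᵐ ω ∂μ, ‖V ω‖ ≤ C := by simpa only [Real.norm_eq_abs] using hVC
  have hV_int : Integrable V μ := .of_bound hV C hVC'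
  have hcondV : AEStronglyMeasurable[m] μ[V|m] μ :=
    stronglyMeasurable_condExp.aestronglyMeasurable
  have hcondVC : ∀ᵐ ω ∂μ, |μ[V|m] ω| ≤ C := ae_bdd_abs_condExp_of_ae_bdd_abs hVC
  have hcondV_mul {U : Ω → ℝ} (hU : Integrable U μ) : Integrable (μ[V|m] * U) μ :=
    hU.bdd_mul (hcondV.mono hm) (by simpa only [Real.norm_eq_abs] using hcondVC)
  have htrunc (A : ℝ) :
      ∫ ω, (truncation X A * V) ω ∂μ = ∫ ω, (truncation X A * μ[V|m]) ω ∂μ :=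
    integral_mul_eq_integral_mul_condExp_of_condExp_mul_eq hm
      hX.aestronglyMeasurable.integrable_truncation
      (hcondV_mul hX.aestronglyMeasurable.integrable_truncation) (hfactor A)
  calc ∫ ω, (X * V) ω ∂μ = ∫ ω, (X * μ[V|m]) ω ∂μ :=
        tendsto_nhds_unique (tendsto_integral_truncation_mul hX hV hVC)
          ((tendsto_integral_truncation_mul hX (hcondV.mono hm) hcondVC).congr
            fun A => (htrunc A).symm)
    _ = ∫ ω, (μ[X|m] * V) ω ∂μ :=
        (integral_condExp_mul_eq_integral_mul_condExp hm hX hV_int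
          (integrable_condExp.mul_bdd hV hVC') (hcondV_mul hX)).symm

theorem setIntegral_preimage_eq_integral_mul_indicator_comp {E : Type*}
    [MeasurableSpace E] {Y : Ω → E} {B : Set E}
    (hY : Measurable Y) (hB : MeasurableSet B) (h : Ω → ℝ) :
    ∫ ω in Y ⁻¹' B, h ω ∂μ = ∫ ω, (h * (B.indicator (1 : E → ℝ) ∘ Y)) ω ∂μ := by
  rw [← integral_indicator (hY hB)]
  congr with ω
  by_cases hω : Y ω ∈ B <;> simp [hω]

end CondExpIntegral

theorem condexp_sufficient_statistic_general
    {Ω E E' : Type*} [MeasurableSpace Ω] [MeasurableSpace E] [MeasurableSpace E']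
    (μ : Measure Ω) [IsProbabilityMeasure μ]
    (X : Ω → ℝ) (hX : Integrable X μ)
    (Y : Ω → E) (hY : Measurable Y)
    (T : E → E') (hT : Measurable T)
    (hCI : ∀ (f : ℝ → ℝ) (g : E → ℝ), Measurable f → Measurable g →
      (∃ C, ∀ t, |f t| ≤ C) → (∃ C, ∀ t, |g t| ≤ C) →
      MeasureTheory.condExp (MeasurableSpace.comap (T ∘ Y) inferInstance) μ
          (fun ω => f (X ω) * g (Y ω))
        =ᵐ[μ] fun ω =>
          MeasureTheory.condExp (MeasurableSpace.comap (T ∘ Y) inferInstance) μ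
              (fun ω' => f (X ω')) ω *
          MeasureTheory.condExp (MeasurableSpace.comap (T ∘ Y) inferInstance) μ
              (fun ω' => g (Y ω')) ω) :
    MeasureTheory.condExp (MeasurableSpace.comap Y inferInstance) μ X
      =ᵐ[μ] MeasureTheory.condExp (MeasurableSpace.comap (T ∘ Y) inferInstance) μ X := by
  have hσTY_le : MeasurableSpace.comap (T ∘ Y) inferInstance ≤
      MeasurableSpace.comap Y inferInstance := by
    rw [← MeasurableSpace.comap_comp]
    exact MeasurableSpace.comap_mono hT.comap_le
  refine (ae_eq_condExp_of_forall_setIntegral_eq hY.comap_le hX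
    (fun s _ _ => integrable_condExp.integrableOn) ?_
    (stronglyMeasurable_condExp.mono hσTY_le).aestronglyMeasurable).symm
  rintro _ ⟨B, hB, rfl⟩ -
  have hindicator_bound : ∀ t, |B.indicator 1 t| ≤ (1 : ℝ) := fun t => by
    by_cases ht : t ∈ B <;> simp [ht]
  rw [setIntegral_preimage_eq_integral_mul_indicator_comp hY hB,
    setIntegral_preimage_eq_integral_mul_indicator_comp hY hB]
  exact (integral_mul_eq_integral_condExp_mul_of_condExp_truncation_mul_eq
    (hT.comp hY).comap_le hX ((measurable_const.indicator hB).comp hY).aestronglyMeasurable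
    (.of_forall fun ω => hindicator_bound (Y ω))
    fun A => hCI _ _ (measurable_id.indicator measurableSet_Ioc)
      (measurable_const.indicator hB) ⟨|A|, abs_truncation_le_bound id A⟩
      ⟨1, hindicator_bound⟩).symm

/-- **invariance of the conditional expectation under sufficient statistics.**
If `σ(X)` and `σ(Y)` are conditionally independent given `σ(T ∘ Y)` (expressed via bounded
measurable test functions, i.e. `Y ↔ T(Y) ↔ X` is a Markov chain), then
`E[X | σ(Y)] = E[X | σ(T ∘ Y)]` almost surely. -/
theorem condexp_sufficient_statistic
    {Ω E E' : Type*} [MeasurableSpace Ω] [MeasurableSpace E] [MeasurableSpace E']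
    (μ : Measure Ω) [IsProbabilityMeasure μ]
    (X : Ω → ℝ) (hX : Integrable X μ) (hXmeas : Measurable X)
    (Y : Ω → E) (hY : Measurable Y)
    (T : E → E') (hT : Measurable T)
    (hCI : ∀ (f : ℝ → ℝ) (g : E → ℝ), Measurable f → Measurable g →
      (∃ C, ∀ t, |f t| ≤ C) → (∃ C, ∀ t, |g t| ≤ C) →
      MeasureTheory.condExp (MeasurableSpace.comap (T ∘ Y) inferInstance) μ
          (fun ω => f (X ω) * g (Y ω))
        =ᵐ[μ] fun ω =>
          MeasureTheory.condExp (MeasurableSpace.comap (T ∘ Y) inferInstance) μ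
              (fun ω' => f (X ω')) ω *
          MeasureTheory.condExp (MeasurableSpace.comap (T ∘ Y) inferInstance) μ
              (fun ω' => g (Y ω')) ω) :
    MeasureTheory.condExp (MeasurableSpace.comap Y inferInstance) μ X
      =ᵐ[μ] MeasureTheory.condExp (MeasurableSpace.comap (T ∘ Y) inferInstance) μ X :=
  condexp_sufficient_statistic_general μ X hX Y hY T hT hCI
end
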